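/- arXiv:2211.05873 — 2 statements merged into one kernel-verified Lean document; each statement's English description precedes it below -/
import Mathlib

section
/- Let C be an (n,M,X,P)-code from the constructed layered family: for each codeword u(i), the decoding set is the product D_i = D_{i,1} × … × D_{i,n} with D_{i,m} = G_c^{(ℓ)} when u_m(i) = x_c^{(ℓ)}, where G_c^{(ℓ)} = {y ∈ ℂ : |y − x_c^{(ℓ)}| ≤ r_c} and the disks G_c^{(ℓ)} are pairwise disjoint over all symbols. Then the average decoding error probability equals γ(C) = 1 − (1/M) ∑_{i=1}^M ∏_{c=1}^C ( 1 − exp(−r_c²/σ²) )^{ n ∑_{ℓ=1}^{L_c} P_{u(i)}(x_c^{(ℓ)}) }. In particular, if C is an (n,M,X,P,ε,B,δ)-code then ε ≥ 1 − (1/M) ∑_{i=1}^M ∏_{c=1}^C (1 − exp(−r_c²/σ²))^{ n ∑_{ℓ=1}^{L_c} P_{u(i)}(x_c^{(ℓ)}) }. -/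
/-!
The decoding set of a codeword is a product of disks and the noise is independent across channel
uses, so by Fubini the probability of correct decoding is a product over the `n` uses. In polar
coordinates, the Gaussian mass of the disk of radius `r` around the transmitted symbol is
`1 - exp (-r² / σ²)`. Grouping the `n` factors by layer, layer `c` contributes one factor per
position carrying a symbol of that layer, and this number is `n * ∑ ℓ, P_{u(i)} (x_c^{(ℓ)})`
because disjointness of the disks makes distinct symbols distinct points of `ℂ`.
-/

open MeasureTheory Finset

/-- The average decoding error probability of a code with per-symbol decoding
sets (the decoding set of a codeword is the product of the decoding balls of
its symbols) over the complex AWGN channel with noise variance σ². -/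
noncomputable def avgDEP (n M : ℕ) (σ : ℝ) {S : Type} (sym : S → ℂ) (rad : S → ℝ)
    (w : Fin M → Fin n → S) : ℝ :=
  (1 / (M : ℝ)) * ∑ i,
    (1 - ∫ y in Set.univ.pi (fun m => Metric.closedBall (sym (w i m)) (rad (w i m))),
      ∏ m, (1 / (Real.pi * σ ^ 2)) *
        Real.exp (-(‖y m - sym (w i m)‖) ^ 2 / σ ^ 2))

open Metric Real

theorem Complex.integral_closedBall_zero_radial (f : ℝ → ℝ) {r : ℝ} (hr : 0 ≤ r) :
    ∫ y in closedBall (0 : ℂ) r, f ‖y‖ = 2 * π * ∫ ρ in 0..r, ρ * f ρ := by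
  have hind : ∀ y : ℂ, (closedBall 0 r).indicator (fun y => f ‖y‖) y
      = (Set.Iic r).indicator f ‖y‖ := fun y => by
    by_cases h : ‖y‖ ≤ r <;> simp [h]
  rw [← integral_indicator measurableSet_closedBall, funext hind,
    integral_fun_norm_addHaar volume ((Set.Iic r).indicator f)]
  have hvol : volume.real (ball (0 : ℂ) 1) = π := by
    simp [Measure.real, Complex.volume_ball]
  simp only [Complex.finrank_real_complex, hvol, smul_eq_mul, nsmul_eq_mul, Nat.cast_ofNat,
    Nat.add_one_sub_one, pow_one]
  have hmul : (fun y => y * (Set.Iic r).indicator f y) = (Set.Iic r).indicator (fun y => y * f y) :=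
    funext fun y => (Set.indicator_mul_right _ (fun y => y) f).symm
  rw [hmul, setIntegral_indicator measurableSet_Iic, Set.Ioi_inter_Iic,
    intervalIntegral.integral_of_le hr, mul_assoc]

theorem Complex.integral_closedBall_gaussian (b : ℝ) (x : ℂ) {r : ℝ} (hr : 0 ≤ r) :
    ∫ y in closedBall x r, b / π * Real.exp (-b * ‖y - x‖ ^ 2) = 1 - Real.exp (-b * r ^ 2) := by
  set g : ℝ → ℝ := fun ρ => b / π * Real.exp (-b * ρ ^ 2)
  have hcenter : ∫ y in closedBall x r, g ‖y - x‖ = ∫ y in closedBall (0 : ℂ) r, g ‖y‖ := by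
    rw [← integral_indicator measurableSet_closedBall,
      ← integral_indicator measurableSet_closedBall,
      ← integral_add_right_eq_self _ x]
    congr 1 with y
    by_cases h : ‖y‖ ≤ r <;> simp [h, dist_eq_norm]
  have hderiv : ∀ ρ, HasDerivAt (fun ρ => -Real.exp (-b * ρ ^ 2)) (2 * π * (ρ * g ρ)) ρ := by
    intro ρ
    refine (((hasDerivAt_pow 2 ρ).const_mul (-b)).exp.neg).congr_deriv ?_
    simp only [g]
    field_simp
    ring
  rw [hcenter, Complex.integral_closedBall_zero_radial g hr, ← intervalIntegral.integral_const_mul,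
    intervalIntegral.integral_eq_sub_of_hasDerivAt (fun ρ _ => hderiv ρ)
      (Continuous.intervalIntegrable (by fun_prop) _ _)]
  rw [zero_pow two_ne_zero, mul_zero, Real.exp_zero]
  ring

theorem setIntegral_univ_pi_prod_eq_prod {ι 𝕜 : Type*} [Fintype ι] [RCLike 𝕜] {E : ι → Type*}
    {mE : ∀ i, MeasurableSpace (E i)} {μ : (i : ι) → Measure (E i)} [∀ i, SigmaFinite (μ i)]
    (f : (i : ι) → E i → 𝕜) (s : (i : ι) → Set (E i)) :
    ∫ x in Set.univ.pi s, ∏ i, f i (x i) ∂Measure.pi μ = ∏ i, ∫ y in s i, f i y ∂μ i := by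
  rw [Measure.restrict_pi_pi]
  exact integral_fintype_prod_eq_prod f

theorem Function.injective_of_disjoint_closedBall {S X : Type*} [PseudoMetricSpace X] {f : S → X}
    {rad : S → ℝ} (hrad : ∀ s, 0 ≤ rad s)
    (hdisj : ∀ s t, s ≠ t → Disjoint (closedBall (f s) (rad s)) (closedBall (f t) (rad t))) :
    Function.Injective f := by
  intro s t hst
  by_contra hne
  refine Set.disjoint_left.mp (hdisj s t hne) (mem_closedBall_self (hrad s)) ?_
  rw [hst]
  exact mem_closedBall_self (hrad t)

theorem sum_card_filter_eq_mk_eq_card_filter_fst {ι κ : Type*} {β : κ → Type*} [Fintype ι]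
    [∀ c, Fintype (β c)] [DecidableEq κ] [∀ c, DecidableEq (β c)] (w : ι → (c : κ) × β c) (c : κ) :
    ∑ ℓ : β c, #{m | w m = ⟨c, ℓ⟩} = #{m | (w m).1 = c} := by
  rw [← sum_image (f := fun s => #{m | w m = s}) (fun _ _ _ _ h => sigma_mk_injective h),
    sum_card_fiberwise_eq_card_filter]
  congr 1 with m
  simp only [mem_filter, mem_image, mem_univ, true_and]
  obtain ⟨c', ℓ'⟩ := w m
  constructor
  · rintro ⟨ℓ, h⟩
    cases h
    rfl
  · rintro rfl
    exact ⟨ℓ', rfl⟩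

theorem Fintype.prod_comp_eq_prod_pow_card {ι κ M : Type*} [Fintype ι] [Fintype κ] [DecidableEq κ]
    [CommMonoid M] (f : κ → M) (g : ι → κ) :
    ∏ m, f (g m) = ∏ c, f c ^ #{m | g m = c} := by
  rw [← Finset.prod_fiberwise' univ g f]
  simp only [prod_const]

theorem avgDEP_eq_one_sub {n M : ℕ} (hM : 0 < M) (σ : ℝ) {S : Type} (sym : S → ℂ) {rad : S → ℝ}
    (hrad : ∀ s, 0 ≤ rad s) (w : Fin M → Fin n → S) :
    avgDEP n M σ sym rad w
      = 1 - (1 / (M : ℝ)) * ∑ i, ∏ m, (1 - Real.exp (-(rad (w i m)) ^ 2 / σ ^ 2)) := by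
  have hdisk : ∀ x : ℂ, ∀ R, 0 ≤ R →
      ∫ y in closedBall x R, 1 / (π * σ ^ 2) * Real.exp (-‖y - x‖ ^ 2 / σ ^ 2)
        = 1 - Real.exp (-R ^ 2 / σ ^ 2) := by
    intro x R hR
    convert Complex.integral_closedBall_gaussian (σ ^ 2)⁻¹ x hR using 1
    · congr 1 with y
      ring_nf
    · ring_nf
  have hcodeword : ∀ i, ∫ y in Set.univ.pi (fun m => closedBall (sym (w i m)) (rad (w i m))),
      ∏ m, 1 / (π * σ ^ 2) * Real.exp (-‖y m - sym (w i m)‖ ^ 2 / σ ^ 2)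
        = ∏ m, (1 - Real.exp (-(rad (w i m)) ^ 2 / σ ^ 2)) := fun i => by
    rw [volume_pi, setIntegral_univ_pi_prod_eq_prod
      (fun m y => 1 / (π * σ ^ 2) * Real.exp (-‖y - sym (w i m)‖ ^ 2 / σ ^ 2))]
    exact prod_congr rfl fun m _ => hdisk _ _ (hrad _)
  simp only [avgDEP, hcodeword, sum_sub_distrib, sum_const, card_univ, Fintype.card_fin,
    nsmul_eq_mul, mul_one, mul_sub]
  rw [one_div_mul_cancel (by positivity)]

theorem natCast_mul_sum_type_eq_card {n : ℕ} {κ X : Type*} {β : κ → Type*} [∀ c, Fintype (β c)]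
    [DecidableEq κ] [∀ c, DecidableEq (β c)] [DecidableEq X] {sym : (c : κ) × β c → X}
    (hsym : Function.Injective sym) (w : Fin n → (c : κ) × β c) (c : κ) :
    (n : ℝ) * ∑ ℓ : β c, 1 / (n : ℝ) * ∑ m, (if sym (w m) = sym ⟨c, ℓ⟩ then (1 : ℝ) else 0)
      = #{m | (w m).1 = c} := by
  rcases n.eq_zero_or_pos with rfl | hn
  · simp
  simp_rw [hsym.eq_iff, sum_boole, ← mul_sum, ← mul_assoc,
    mul_one_div_cancel (by positivity : (n : ℝ) ≠ 0), one_mul]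
  exact_mod_cast sum_card_filter_eq_mk_eq_card_filter_fst w c

theorem layered_dep_formula_general
    (n M C : ℕ) (hM : 0 < M)
    (σ ε : ℝ)
    -- the layered constellation
    (Lc : Fin C → ℕ) (r : Fin C → ℝ)
    (hr : ∀ c, 0 < r c)
    (sym : ((c : Fin C) × Fin (Lc c)) → ℂ)
    -- the decoding disks are pairwise disjoint
    (hdisj : ∀ s t : (c : Fin C) × Fin (Lc c), s ≠ t →
      Disjoint (Metric.closedBall (sym s) (r s.1)) (Metric.closedBall (sym t) (r t.1)))
    -- the codewords (as sequences of symbols of the constellation)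
    (w : Fin M → Fin n → (c : Fin C) × Fin (Lc c))
    -- the type of each codeword
    (Pu : Fin M → ℂ → ℝ)
    (hPu : ∀ i z, Pu i z = (1 / (n : ℝ)) * ∑ m, if sym (w i m) = z then (1 : ℝ) else 0) :
    avgDEP n M σ sym (fun s => r s.1) w
      = 1 - (1 / (M : ℝ)) * ∑ i, ∏ c,
          (1 - Real.exp (-(r c) ^ 2 / σ ^ 2)) ^
            ((n : ℝ) * ∑ ℓ : Fin (Lc c), Pu i (sym ⟨c, ℓ⟩)) ∧
    (avgDEP n M σ sym (fun s => r s.1) w ≤ ε →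
      ε ≥ 1 - (1 / (M : ℝ)) * ∑ i, ∏ c,
          (1 - Real.exp (-(r c) ^ 2 / σ ^ 2)) ^
            ((n : ℝ) * ∑ ℓ : Fin (Lc c), Pu i (sym ⟨c, ℓ⟩))) := by
  have hrad : ∀ s : (c : Fin C) × Fin (Lc c), 0 ≤ r s.1 := fun s => (hr s.1).le
  have hinj : Function.Injective sym := Function.injective_of_disjoint_closedBall hrad hdisj
  have hformula : avgDEP n M σ sym (fun s => r s.1) w
      = 1 - (1 / (M : ℝ)) * ∑ i, ∏ c,
          (1 - Real.exp (-(r c) ^ 2 / σ ^ 2)) ^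
            ((n : ℝ) * ∑ ℓ : Fin (Lc c), Pu i (sym ⟨c, ℓ⟩)) := by
    rw [avgDEP_eq_one_sub hM σ sym hrad w]
    congr 2
    refine sum_congr rfl fun i _ => ?_
    simp_rw [hPu, natCast_mul_sum_type_eq_card hinj, Real.rpow_natCast]
    exact Fintype.prod_comp_eq_prod_pow_card (fun c => 1 - Real.exp (-(r c) ^ 2 / σ ^ 2)) _
  exact ⟨hformula, fun h => hformula ▸ h⟩

/-- Achievability: closed form for the average DEP of a code from the
constructed layered family, and the resulting lower bound on ε. -/
theorem layered_dep_formula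
    (n M C : ℕ) (hn : 0 < n) (hM : 0 < M)
    (σ P ε : ℝ) (hσ : 0 < σ)
    -- the layered constellation
    (Lc : Fin C → ℕ) (A : Fin C → ℝ) (α : Fin C → ℝ) (r : Fin C → ℝ)
    (hA : ∀ c, 0 < A c) (hAanti : StrictAnti A) (hr : ∀ c, 0 < r c)
    (sym : ((c : Fin C) × Fin (Lc c)) → ℂ)
    (hsym : ∀ s : (c : Fin C) × Fin (Lc c),
      sym s = Complex.ofReal (A s.1) *
        Complex.exp (Complex.I * Complex.ofReal
          (2 * Real.pi * ((s.2 : ℕ) : ℝ) / ((Lc s.1 : ℕ) : ℝ) + α s.1)))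
    (hamp : ∀ s : (c : Fin C) × Fin (Lc c), ‖sym s‖ ≤ P)
    -- the decoding disks are pairwise disjoint
    (hdisj : ∀ s t : (c : Fin C) × Fin (Lc c), s ≠ t →
      Disjoint (Metric.closedBall (sym s) (r s.1)) (Metric.closedBall (sym t) (r t.1)))
    -- the codewords (as sequences of symbols of the constellation)
    (w : Fin M → Fin n → (c : Fin C) × Fin (Lc c))
    -- the type of each codeword
    (Pu : Fin M → ℂ → ℝ)
    (hPu : ∀ i z, Pu i z = (1 / (n : ℝ)) * ∑ m, if sym (w i m) = z then (1 : ℝ) else 0) :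
    avgDEP n M σ sym (fun s => r s.1) w
      = 1 - (1 / (M : ℝ)) * ∑ i, ∏ c,
          (1 - Real.exp (-(r c) ^ 2 / σ ^ 2)) ^
            ((n : ℝ) * ∑ ℓ : Fin (Lc c), Pu i (sym ⟨c, ℓ⟩)) ∧
    (avgDEP n M σ sym (fun s => r s.1) w ≤ ε →
      ε ≥ 1 - (1 / (M : ℝ)) * ∑ i, ∏ c,
          (1 - Real.exp (-(r c) ^ 2 / σ ^ 2)) ^
            ((n : ℝ) * ∑ ℓ : Fin (Lc c), Pu i (sym ⟨c, ℓ⟩))) :=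
  layered_dep_formula_general n M C hM σ ε Lc r hr sym hdisj w Pu hPu
end

section
/- Let C be an (n,M,X,P)-code from the constructed layered family whose per-symbol decoding disks all have the same radius r > 0 (r_c = r for all c) and are pairwise disjoint, with product decoding sets. Then the average decoding error probability equals γ(C) = 1 − (1 − exp(−r²/σ²))ⁿ, and consequently, if C is an (n,M,X,P,ε,B,δ)-code with 0 < ε < 1, then r ≥ √( σ² · log( 1 / (1 − (1−ε)^{1/n}) ) ). -/
/-!
The noise density is radial about the transmitted symbol, so its mass on a decoding disk of
radius `r` is, in polar coordinates, `2π ∫₀^r t e^{-t²/σ²} / (πσ²) dt = 1 - e^{-r²/σ²}`,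
independently of the symbol. By Fubini the product density gives every codeword's product of
disks the mass `(1 - e^{-r²/σ²})ⁿ`, which is therefore also the average. The radius bound is
this identity solved for `r` after taking `n`-th roots and logarithms.
-/

open MeasureTheory Finset

open Real

theorem integral_mul_exp_neg_sq_div {v : ℝ} (hv : v ≠ 0) (r : ℝ) :
    ∫ t in (0 : ℝ)..r, t * exp (-t ^ 2 / v) = v / 2 * (1 - exp (-r ^ 2 / v)) := by
  have hderiv (t : ℝ) :
      HasDerivAt (fun t => -(v / 2) * exp (-t ^ 2 / v)) (t * exp (-t ^ 2 / v)) t := by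
    have hinner : HasDerivAt (fun t => -t ^ 2 / v) (-(2 * t) / v) t := by
      simpa using (hasDerivAt_pow 2 t).neg.div_const v
    refine (hinner.exp.const_mul (-(v / 2))).congr_deriv ?_
    field_simp
  rw [intervalIntegral.integral_eq_sub_of_hasDerivAt (fun t _ => hderiv t)
    (by apply Continuous.intervalIntegrable; fun_prop)]
  simp only [ne_eq, OfNat.ofNat_ne_zero, not_false_eq_true, zero_pow, neg_zero, zero_div,
    exp_zero]
  ring

theorem Complex.integral_fun_norm (f : ℝ → ℝ) :
    ∫ z : ℂ, f ‖z‖ = 2 * π * ∫ t in Set.Ioi 0, t * f t := by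
  rw [integral_fun_norm_addHaar volume f, Complex.finrank_real_complex]
  simp only [measureReal_def, Complex.volume_ball, ENNReal.ofReal_one, one_pow, one_mul,
    ENNReal.coe_toReal, NNReal.coe_real_pi, Nat.add_one_sub_one, pow_one, smul_eq_mul,
    nsmul_eq_mul, Nat.cast_ofNat]
  ring

theorem Complex.setIntegral_closedBall_fun_norm_sub (f : ℝ → ℝ) (x : ℂ) {r : ℝ} (hr : 0 ≤ r) :
    ∫ y in Metric.closedBall x r, f ‖y - x‖ = 2 * π * ∫ t in (0 : ℝ)..r, t * f t := by
  have hind : (Metric.closedBall x r).indicator (fun y => f ‖y - x‖)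
      = fun y => (Set.Iic r).indicator f ‖y - x‖ := by
    ext y
    classical
    rw [Set.indicator_apply, Set.indicator_apply]
    simp only [Metric.mem_closedBall, dist_eq_norm, Set.mem_Iic]
  rw [← integral_indicator measurableSet_closedBall, hind,
    integral_sub_right_eq_self (fun z => (Set.Iic r).indicator f ‖z‖), Complex.integral_fun_norm,
    intervalIntegral.integral_of_le hr, ← Set.Ioi_inter_Iic,
    ← setIntegral_indicator measurableSet_Iic]
  congr 2
  ext t
  simp [Set.indicator_apply]

theorem Complex.setIntegral_closedBall_gaussian {v : ℝ} (hv : v ≠ 0) (x : ℂ) {r : ℝ}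
    (hr : 0 ≤ r) :
    ∫ y in Metric.closedBall x r, 1 / (π * v) * Real.exp (-‖y - x‖ ^ 2 / v)
      = 1 - Real.exp (-r ^ 2 / v) := by
  rw [Complex.setIntegral_closedBall_fun_norm_sub
    (fun t => 1 / (π * v) * Real.exp (-t ^ 2 / v)) x hr]
  simp only [mul_left_comm _ (1 / (π * v)), intervalIntegral.integral_const_mul,
    integral_mul_exp_neg_sq_div hv]
  field_simp

theorem setIntegral_univ_pi_prod {ι : Type*} [Fintype ι] {E : ι → Type*}
    [∀ i, MeasureSpace (E i)] [∀ i, SigmaFinite (volume : Measure (E i))]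
    (s : ∀ i, Set (E i)) (f : ∀ i, E i → ℝ) :
    ∫ x in Set.univ.pi s, ∏ i, f i (x i) = ∏ i, ∫ x in s i, f i x := by
  rw [volume_pi, Measure.restrict_pi_pi, integral_fintype_prod_eq_prod]

theorem setIntegral_univ_pi_closedBall_gaussian {n : ℕ} {v : ℝ} (hv : v ≠ 0) (z : Fin n → ℂ)
    {r : ℝ} (hr : 0 ≤ r) :
    ∫ y in Set.univ.pi (fun m => Metric.closedBall (z m) r),
      ∏ m, 1 / (π * v) * exp (-‖y m - z m‖ ^ 2 / v) = (1 - exp (-r ^ 2 / v)) ^ n := by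
  refine (setIntegral_univ_pi_prod (fun m => Metric.closedBall (z m) r)
    (fun m t => 1 / (π * v) * exp (-‖t - z m‖ ^ 2 / v))).trans ?_
  simp only [Complex.setIntegral_closedBall_gaussian hv _ hr, prod_const, card_univ,
    Fintype.card_fin]

theorem avgDEP_const_radius {n M : ℕ} (hM : M ≠ 0) {σ : ℝ} (hσ : σ ≠ 0) {S : Type}
    (sym : S → ℂ) {r : ℝ} (hr : 0 ≤ r) (w : Fin M → Fin n → S) :
    avgDEP n M σ sym (fun _ => r) w = 1 - (1 - exp (-r ^ 2 / σ ^ 2)) ^ n := by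
  simp only [avgDEP, setIntegral_univ_pi_closedBall_gaussian (pow_ne_zero 2 hσ) _ hr, sum_const,
    card_univ, Fintype.card_fin, nsmul_eq_mul]
  field_simp

theorem sqrt_mul_log_one_div_le_of_exp_neg_le {v r q : ℝ} (hv : 0 < v) (hr : 0 ≤ r)
    (h : exp (-r ^ 2 / v) ≤ q) : √(v * log (1 / q)) ≤ r := by
  have hlog : -r ^ 2 / v ≤ log q := (le_log_iff_exp_le ((exp_pos _).trans_le h)).mpr h
  rw [sqrt_le_left hr, one_div, log_inv, ← le_div_iff₀' hv]
  rw [neg_div] at hlog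
  linarith

theorem sqrt_mul_log_le_of_one_sub_pow_le {n : ℕ} (hn : n ≠ 0) {v r ε : ℝ} (hv : 0 < v)
    (hr : 0 ≤ r) (hε : ε < 1) (h : 1 - (1 - exp (-r ^ 2 / v)) ^ n ≤ ε) :
    √(v * log (1 / (1 - (1 - ε) ^ ((1 : ℝ) / n)))) ≤ r := by
  refine sqrt_mul_log_one_div_le_of_exp_neg_le hv hr ?_
  have hexp : exp (-r ^ 2 / v) ≤ 1 :=
    exp_le_one_iff.mpr (div_nonpos_of_nonpos_of_nonneg (neg_nonpos.mpr (sq_nonneg r)) hv.le)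
  have hroot : (1 - ε) ^ ((1 : ℝ) / n) ≤ 1 - exp (-r ^ 2 / v) := by
    rw [one_div, rpow_inv_le_iff_of_pos (by linarith) (by linarith) (by positivity),
      rpow_natCast]
    linarith
  linarith

theorem layered_dep_common_radius_general
    (n M C : ℕ) (hn : 0 < n) (hM : 0 < M)
    (σ ε : ℝ) (hσ : 0 < σ) (hε₁ : ε < 1)
    -- the layered constellation
    (Lc : Fin C → ℕ)
    -- the common radius of the decoding disks
    (r : ℝ) (hr : 0 < r)
    (sym : ((c : Fin C) × Fin (Lc c)) → ℂ)
    -- the codewords (as sequences of symbols of the constellation)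
    (w : Fin M → Fin n → (c : Fin C) × Fin (Lc c)) :
    avgDEP n M σ sym (fun _ => r) w = 1 - (1 - Real.exp (-r ^ 2 / σ ^ 2)) ^ n ∧
    (avgDEP n M σ sym (fun _ => r) w ≤ ε →
      r ≥ Real.sqrt (σ ^ 2 *
        Real.log (1 / (1 - (1 - ε) ^ ((1 : ℝ) / (n : ℝ)))))) := by
  have hDEP := avgDEP_const_radius hM.ne' hσ.ne' sym hr.le w
  refine ⟨hDEP, fun hle => ?_⟩
  rw [hDEP] at hle
  exact sqrt_mul_log_le_of_one_sub_pow_le hn.ne' (by positivity) hr.le hε₁ hle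

/-- Achievability: for a code from the constructed layered family whose
per-symbol decoding disks all have the same radius r, the average DEP equals
1 − (1 − e^{−r²/σ²})ⁿ, and the resulting lower bound on the radius r. -/
theorem layered_dep_common_radius
    (n M C : ℕ) (hn : 0 < n) (hM : 0 < M)
    (σ P ε : ℝ) (hσ : 0 < σ) (hε₀ : 0 < ε) (hε₁ : ε < 1)
    -- the layered constellation
    (Lc : Fin C → ℕ) (A : Fin C → ℝ) (α : Fin C → ℝ)
    (hA : ∀ c, 0 < A c) (hAanti : StrictAnti A)
    -- the common radius of the decoding disks
    (r : ℝ) (hr : 0 < r)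
    (sym : ((c : Fin C) × Fin (Lc c)) → ℂ)
    (hsym : ∀ s : (c : Fin C) × Fin (Lc c),
      sym s = Complex.ofReal (A s.1) *
        Complex.exp (Complex.I * Complex.ofReal
          (2 * Real.pi * ((s.2 : ℕ) : ℝ) / ((Lc s.1 : ℕ) : ℝ) + α s.1)))
    (hamp : ∀ s : (c : Fin C) × Fin (Lc c), ‖sym s‖ ≤ P)
    -- the decoding disks are pairwise disjoint
    (hdisj : ∀ s t : (c : Fin C) × Fin (Lc c), s ≠ t →
      Disjoint (Metric.closedBall (sym s) r) (Metric.closedBall (sym t) r))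
    -- the codewords (as sequences of symbols of the constellation)
    (w : Fin M → Fin n → (c : Fin C) × Fin (Lc c)) :
    avgDEP n M σ sym (fun _ => r) w = 1 - (1 - Real.exp (-r ^ 2 / σ ^ 2)) ^ n ∧
    (avgDEP n M σ sym (fun _ => r) w ≤ ε →
      r ≥ Real.sqrt (σ ^ 2 *
        Real.log (1 / (1 - (1 - ε) ^ ((1 : ℝ) / (n : ℝ)))))) :=
  layered_dep_common_radius_general n M C hn hM σ ε hσ hε₁ Lc r hr sym w
end
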